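/- A triple (b,e,a) of splitting types of ranks m, m+n, n admits a balancing datum if and only if it satisfies the realizability criterion (i.e., it is weakly eligible and A(μ,ν) ≥ 0 and B(μ,ν) ≥ 0 for all 1 ≤ μ ≤ m, 1 ≤ ν ≤ n with ν ≥ h_μ). -/
import Mathlib


open Finset

/-- Degree of a 1-based integer tuple of rank `n`. -/
def degT (a : ℕ → ℤ) (n : ℕ) : ℤ := ∑ i ∈ Icc 1 n, a i

/-- `a` is weakly increasing on indices `1, …, n` (a splitting type of rank `n`). -/
def Incr (a : ℕ → ℤ) (n : ℕ) : Prop := ∀ i j : ℕ, 1 ≤ i → i ≤ j → j ≤ n → a i ≤ a j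

/-- `S(μ,ν) = Σ_{i=ν}^n a_i + Σ_{i=μ}^m b_i − Σ_{i=μ+ν−1}^{m+n} e_i`. -/
def Sfun (b e a : ℕ → ℤ) (m n μ ν : ℕ) : ℤ :=
  (∑ i ∈ Icc ν n, a i) + (∑ i ∈ Icc μ m, b i) - ∑ i ∈ Icc (μ + ν - 1) (m + n), e i

/-- `A(μ,ν) = a_ν − e_{μ+ν}`. -/
def Afun (e a : ℕ → ℤ) (μ ν : ℕ) : ℤ := a ν - e (μ + ν)

/-- `B(μ,ν) = e_{μ+ν−1} − b_μ`. -/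
def Bfun (b e : ℕ → ℤ) (μ ν : ℕ) : ℤ := e (μ + ν - 1) - b μ

/-- `h_μ = min{ν : 1 ≤ ν ≤ n+1, S(μ,ν') < 0 for all ν' with ν < ν' ≤ n+1}`. -/
noncomputable def hfun (b e a : ℕ → ℤ) (m n μ : ℕ) : ℕ :=
  sInf {ν : ℕ | 1 ≤ ν ∧ ν ≤ n + 1 ∧ ∀ ν', ν < ν' → ν' ≤ n + 1 → Sfun b e a m n μ ν' < 0}

/-- Weak eligibility of a triple `(b,e,a)` of ranks `m, m+n, n`. -/
def WeaklyEligible (b e a : ℕ → ℤ) (m n : ℕ) : Prop :=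
  degT a n + degT b m = degT e (m + n) ∧
  (∀ i, 1 ≤ i → i ≤ n → e i ≤ a i) ∧
  (∀ i, 1 ≤ i → i ≤ m → b i ≤ e (n + i))

/-- The realizability criterion: weakly eligible, and `A(μ,ν) ≥ 0`, `B(μ,ν) ≥ 0`
whenever `1 ≤ μ ≤ m`, `1 ≤ ν ≤ n` and `ν ≥ h_μ`. -/
def RealizCrit (b e a : ℕ → ℤ) (m n : ℕ) : Prop :=
  WeaklyEligible b e a m n ∧
  ∀ μ ν, 1 ≤ μ → μ ≤ m → 1 ≤ ν → ν ≤ n → hfun b e a m n μ ≤ ν →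
    0 ≤ Afun e a μ ν ∧ 0 ≤ Bfun b e μ ν

/-- `f ≥ g` in the balancedness partial order (for tuples of rank `n`):
all prefix sums of `f` dominate those of `g`. -/
def MoreBal (f g : ℕ → ℤ) (n : ℕ) : Prop :=
  ∀ k, k ≤ n → (∑ i ∈ Icc 1 k, g i) ≤ ∑ i ∈ Icc 1 k, f i

/-- `f > g` in the balancedness partial order: `f ≥ g` and `f ≠ g` (on indices `1..n`). -/
def StrictMoreBal (f g : ℕ → ℤ) (n : ℕ) : Prop :=
  MoreBal f g n ∧ ∃ i, 1 ≤ i ∧ i ≤ n ∧ f i ≠ g i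

/-- `hom(u,v) = Σ_i Σ_j max(0, v_j − u_i + 1)`, the dimension of
`Hom(O(u), O(v))` on `P¹`. -/
def homT (u : ℕ → ℤ) (p : ℕ) (v : ℕ → ℤ) (q : ℕ) : ℤ :=
  ∑ i ∈ Icc 1 p, ∑ j ∈ Icc 1 q, max 0 (v j - u i + 1)

/-- `(σ, τ, Γ)` is a balancing datum for the triple `(b,e,a)` of ranks `m, m+n, n`. -/
def IsBalDatum (b e a : ℕ → ℤ) (m n : ℕ) (σ τ : ℕ → ℕ) (Γ : ℕ → ℕ → ℕ) : Prop :=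
  (∀ j ∈ Icc 1 n, σ j ∈ Icc 1 (m + n)) ∧
  (∀ i ∈ Icc 1 m, τ i ∈ Icc 1 (m + n)) ∧
  Set.InjOn σ ↑(Icc 1 n) ∧
  Set.InjOn τ ↑(Icc 1 m) ∧
  (∀ i ∈ Icc 1 m, ∀ j ∈ Icc 1 n, τ i ≠ σ j) ∧
  (∀ x ∈ Icc 1 (m + n), (∃ j ∈ Icc 1 n, σ j = x) ∨ (∃ i ∈ Icc 1 m, τ i = x)) ∧
  (∀ i ∈ Icc 1 m, ∀ j ∈ Icc 1 n, Γ i j ≠ 0 →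
    b i < e (τ i) ∧ e (τ i) ≤ e (σ j) ∧ e (σ j) < a j ∧
    (Γ i j : ℤ) ≤ e (τ i) - b i ∧ (Γ i j : ℤ) ≤ a j - e (σ j)) ∧
  (∀ i ∈ Icc 1 m, (∑ j ∈ Icc 1 n, (Γ i j : ℤ)) = e (τ i) - b i) ∧
  (∀ j ∈ Icc 1 n, (∑ i ∈ Icc 1 m, (Γ i j : ℤ)) = a j - e (σ j))

/-- The triple `(b,e,a)` admits a balancing datum. -/
def HasBalDatum (b e a : ℕ → ℤ) (m n : ℕ) : Prop :=
  ∃ σ τ Γ, IsBalDatum b e a m n σ τ Γ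



-- ===== auxiliary lemmas =====

lemma sum_Icc_bot (f : ℕ → ℤ) (p q : ℕ) (h : p ≤ q) :
    ∑ i ∈ Icc p q, f i = f p + ∑ i ∈ Icc (p+1) q, f i := by
  have : Icc p q = insert p (Icc (p+1) q) := by
    ext x; simp only [mem_Icc, mem_insert]; omega
  rw [this, Finset.sum_insert (by simp)]

lemma down_closed_eq_Icc (N : ℕ) (T : Finset ℕ) (hT : T ⊆ Icc 1 N)
    (hd : ∀ i j : ℕ, 1 ≤ i → i ≤ j → j ∈ T → i ∈ T) : T = Icc 1 T.card := by
  ext x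
  simp only [mem_Icc]
  constructor
  · intro hx
    have h1 : 1 ≤ x := (mem_Icc.mp (hT hx)).1
    have : Icc 1 x ⊆ T := fun y hy => hd y x (mem_Icc.mp hy).1 (mem_Icc.mp hy).2 hx
    have := Finset.card_le_card this
    simp [Nat.card_Icc] at this
    omega
  · rintro ⟨h1, h2⟩
    have hne : T.Nonempty := by
      rw [← Finset.card_pos]; omega
    have hM := T.max'_mem hne
    have hsub : T ⊆ Icc 1 (T.max' hne) := fun y hy =>
      mem_Icc.mpr ⟨(mem_Icc.mp (hT hy)).1, T.le_max' y hy⟩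
    have := Finset.card_le_card hsub
    simp [Nat.card_Icc] at this
    exact hd x (T.max' hne) h1 (by omega) hM

lemma up_closed_eq_Icc (N : ℕ) (T : Finset ℕ) (hT : T ⊆ Icc 1 N)
    (hu : ∀ i j : ℕ, i ∈ T → i ≤ j → j ≤ N → j ∈ T) : T = Icc (N + 1 - T.card) N := by
  ext x
  simp only [mem_Icc]
  constructor
  · intro hx
    obtain ⟨h1, h2⟩ := mem_Icc.mp (hT hx)
    have : Icc x N ⊆ T := fun y hy => hu x y hx (mem_Icc.mp hy).1 (mem_Icc.mp hy).2
    have := Finset.card_le_card this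
    simp [Nat.card_Icc] at this
    omega
  · rintro ⟨h1, h2⟩
    have hne : T.Nonempty := by
      by_contra hne
      rw [Finset.not_nonempty_iff_eq_empty] at hne
      simp [hne] at h1
      omega
    have hM := T.min'_mem hne
    have hsub : T ⊆ Icc (T.min' hne) N := fun y hy =>
      mem_Icc.mpr ⟨T.min'_le y hy, (mem_Icc.mp (hT hy)).2⟩
    have := Finset.card_le_card hsub
    simp [Nat.card_Icc] at this
    have hm1 : 1 ≤ T.min' hne := (mem_Icc.mp (hT hM)).1
    exact hu (T.min' hne) x hM (by omega) h2


lemma sum_le_top_segment (f : ℕ → ℤ) (N : ℕ)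
    (hf : ∀ i j : ℕ, 1 ≤ i → i ≤ j → j ≤ N → f i ≤ f j)
    (T : Finset ℕ) (hT : T ⊆ Icc 1 N) :
    ∑ i ∈ T, f i ≤ ∑ i ∈ Icc (N + 1 - T.card) N, f i := by
  set p := T.card with hp
  have hpN : p ≤ N := by
    have := Finset.card_le_card hT
    simpa [Nat.card_Icc] using this
  have hg := T.orderEmbOfFin (rfl : T.card = p)
  set g := T.orderEmbOfFin (rfl : T.card = p) with hgdef
  have hmem : ∀ k : Fin p, (g k : ℕ) ∈ T := fun k => Finset.orderEmbOfFin_mem T rfl k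
  have himg : Finset.image (fun k : Fin p => (g k : ℕ)) Finset.univ = T := by
    ext x
    simp only [Finset.mem_image, Finset.mem_univ, true_and]
    constructor
    · rintro ⟨k, rfl⟩; exact hmem k
    · intro hx
      have : x ∈ Set.range g := by rw [Finset.range_orderEmbOfFin]; exact hx
      obtain ⟨k, hk⟩ := this; exact ⟨k, hk⟩
  have hsumT : ∑ i ∈ T, f i = ∑ k : Fin p, f (g k) := by
    calc ∑ i ∈ T, f i = ∑ i ∈ Finset.image (fun k : Fin p => (g k : ℕ)) Finset.univ, f i :=
          (Finset.sum_congr himg (fun _ _ => rfl)).symm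
      _ = ∑ k : Fin p, f (g k) :=
          Finset.sum_image (fun x _ y _ hxy => g.injective hxy)
  -- key bound : g k + (p - k) ≤ N + 1
  have hbound : ∀ k : Fin p, (g k : ℕ) + (p - (k : ℕ)) ≤ N + 1 := by
    intro k
    have hsub : Finset.image (fun j : Fin p => (g j : ℕ)) (Finset.Ici k) ⊆ Icc (g k) N := by
      intro x hx
      simp only [Finset.mem_image, Finset.mem_Ici] at hx
      obtain ⟨j, hj, rfl⟩ := hx
      exact mem_Icc.mpr ⟨g.monotone hj, (mem_Icc.mp (hT (hmem j))).2⟩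
    have hcard : (Finset.image (fun j : Fin p => (g j : ℕ)) (Finset.Ici k)).card = p - (k : ℕ) := by
      rw [Finset.card_image_of_injective _ (fun x y hxy => g.injective hxy)]
      simp [Fin.card_Ici]
    have := Finset.card_le_card hsub
    rw [hcard, Nat.card_Icc] at this
    omega
  rw [hsumT]
  have hrhs : ∑ i ∈ Icc (N + 1 - p) N, f i = ∑ k : Fin p, f (N + 1 - p + k) := by
    rw [Fin.sum_univ_eq_sum_range (fun i => f (N + 1 - p + i)) p, ← Finset.Ico_add_one_right_eq_Icc,
      Finset.sum_Ico_eq_sum_range]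
    have hq : N + 1 - (N + 1 - p) = p := by omega
    rw [hq]
  rw [hrhs]
  apply Finset.sum_le_sum
  intro k _
  have h1 : 1 ≤ (g k : ℕ) := (mem_Icc.mp (hT (hmem k))).1
  have h2 := hbound k
  have hk := k.isLt
  exact hf _ _ h1 (by omega) (by omega)

section S
variable (b e a : ℕ → ℤ) (m n : ℕ)

lemma Srec_mu {μ ν : ℕ} (h1 : 1 ≤ μ) (h2 : μ ≤ m) (h3 : 1 ≤ ν) (h4 : ν ≤ n + 1) :
    Sfun b e a m n (μ + 1) ν = Sfun b e a m n μ ν + e (μ + ν - 1) - b μ := by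
  unfold Sfun
  rw [sum_Icc_bot b μ m h2, sum_Icc_bot e (μ + ν - 1) (m + n) (by omega)]
  have : μ + 1 + ν - 1 = (μ + ν - 1) + 1 := by omega
  rw [this]
  ring

lemma Srec_nu {μ ν : ℕ} (h1 : 1 ≤ μ) (h2 : μ ≤ m + 1) (h3 : 1 ≤ ν) (h4 : ν ≤ n) :
    Sfun b e a m n μ (ν + 1) = Sfun b e a m n μ ν - a ν + e (μ + ν - 1) := by
  unfold Sfun
  rw [sum_Icc_bot a ν n h4, sum_Icc_bot e (μ + ν - 1) (m + n) (by omega)]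
  have : μ + (ν + 1) - 1 = (μ + ν - 1) + 1 := by omega
  rw [this]
  ring

/-- going up in `μ`: if the crossed `b`'s are dominated, nonnegativity of `S` persists. -/
lemma S_mono_mu {μ0 ν : ℕ} (h1 : 1 ≤ μ0) (h3 : 1 ≤ ν) (h4 : ν ≤ n + 1) :
    ∀ μ1, μ0 ≤ μ1 → μ1 ≤ m + 1 →
    (∀ μ, μ0 ≤ μ → μ < μ1 → b μ ≤ e (μ + ν - 1)) →
    0 ≤ Sfun b e a m n μ0 ν → 0 ≤ Sfun b e a m n μ1 ν := by
  intro μ1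
  induction μ1 with
  | zero =>
    intro h _ _ hS
    have : μ0 = 0 := by omega
    rw [← this]; exact hS
  | succ k ih =>
    intro hk hkm hcross hS
    rcases Nat.lt_or_ge μ0 (k + 1) with hlt | hge
    · have hk0 : μ0 ≤ k := by omega
      have hrec := Srec_mu b e a m n (μ := k) (ν := ν) (by omega) (by omega) h3 h4
      have hb := hcross k hk0 (by omega)
      have ihk := ih (by omega) (by omega) (fun μ hμ1 hμ2 => hcross μ hμ1 (by omega)) hS
      rw [hrec]
      linarith
    · have : μ0 = k + 1 := by omega
      rw [← this]; exact hS

/-- going down in `ν`: if the crossed `a`'s dominate, nonnegativity of `S` persists. -/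
lemma S_desc_nu {μ ν0 : ℕ} (h1 : 1 ≤ μ) (h2 : μ ≤ m + 1) (h3 : 1 ≤ ν0) :
    ∀ ν1, ν0 ≤ ν1 → ν1 ≤ n + 1 →
    (∀ ν, ν0 ≤ ν → ν < ν1 → e (μ + ν - 1) ≤ a ν) →
    0 ≤ Sfun b e a m n μ ν1 → 0 ≤ Sfun b e a m n μ ν0 := by
  intro ν1
  induction ν1 with
  | zero =>
    intro h _ _ hS
    have : ν0 = 0 := by omega
    rw [this]; exact hS
  | succ k ih =>
    intro hk hkm hcross hS
    rcases Nat.lt_or_ge ν0 (k + 1) with hlt | hge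
    · have hrec := Srec_nu b e a m n (μ := μ) (ν := k) h1 h2 (by omega) (by omega)
      have ha := hcross k (by omega) (by omega)
      apply ih (by omega) (by omega) (fun ν hν1 hν2 => hcross ν hν1 (by omega))
      rw [hrec] at hS
      linarith
    · have : ν0 = k + 1 := by omega
      rw [this]; exact hS
end S

section H
variable (b e a : ℕ → ℤ) (m n : ℕ)

lemma hfun_mem (μ : ℕ) : (hfun b e a m n μ) ∈
    {ν : ℕ | 1 ≤ ν ∧ ν ≤ n + 1 ∧ ∀ ν', ν < ν' → ν' ≤ n + 1 → Sfun b e a m n μ ν' < 0} := by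
  apply Nat.sInf_mem
  exact ⟨n + 1, by omega, le_refl _, fun ν' h1 h2 => by omega⟩

lemma hfun_ge_one (μ : ℕ) : 1 ≤ hfun b e a m n μ := (hfun_mem b e a m n μ).1

lemma hfun_le (μ : ℕ) : hfun b e a m n μ ≤ n + 1 := (hfun_mem b e a m n μ).2.1

lemma hfun_neg (μ : ℕ) : ∀ ν', hfun b e a m n μ < ν' → ν' ≤ n + 1 →
    Sfun b e a m n μ ν' < 0 := (hfun_mem b e a m n μ).2.2

lemma hfun_S_nonneg {μ : ℕ} (h2 : 2 ≤ hfun b e a m n μ) :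
    0 ≤ Sfun b e a m n μ (hfun b e a m n μ) := by
  set h := hfun b e a m n μ with hh
  have hnm : h - 1 ∉ {ν : ℕ | 1 ≤ ν ∧ ν ≤ n + 1 ∧ ∀ ν', ν < ν' → ν' ≤ n + 1 →
      Sfun b e a m n μ ν' < 0} := Nat.notMem_of_lt_sInf (by rw [← hfun]; omega)
  simp only [Set.mem_setOf_eq, not_and, not_forall] at hnm
  have hle := hfun_le b e a m n μ
  obtain ⟨ν', hν1, hν2, hν3⟩ := hnm (by omega) (by omega)
  have hub : ν' ≤ h := by
    by_contra hc
    exact hν3 (hfun_neg b e a m n μ ν' (by omega) hν2)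
  have : ν' = h := by omega
  rw [← this]
  omega
end H


lemma sum_split (F : ℕ → ℤ) (σ τ : ℕ → ℕ) (Ms Ns : Finset ℕ)
    (hinjτ : Set.InjOn τ ↑Ms) (hinjσ : Set.InjOn σ ↑Ns)
    (hdisj : ∀ i ∈ Ms, ∀ j ∈ Ns, τ i ≠ σ j)
    (T : Finset ℕ) (hT : T = Ms.image τ ∪ Ns.image σ) :
    (∑ k ∈ T, F k = ∑ i ∈ Ms, F (τ i) + ∑ j ∈ Ns, F (σ j)) ∧
      T.card = Ms.card + Ns.card := by
  have hd : Disjoint (Ms.image τ) (Ns.image σ) := by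
    rw [Finset.disjoint_left]
    rintro x hx1 hx2
    obtain ⟨i, hi, rfl⟩ := Finset.mem_image.mp hx1
    obtain ⟨j, hj, hji⟩ := Finset.mem_image.mp hx2
    exact hdisj i hi j hj hji.symm
  have hiτ : ∀ x ∈ Ms, ∀ y ∈ Ms, τ x = τ y → x = y := fun x hx y hy hxy =>
    hinjτ (Finset.mem_coe.mpr hx) (Finset.mem_coe.mpr hy) hxy
  have hiσ : ∀ x ∈ Ns, ∀ y ∈ Ns, σ x = σ y → x = y := fun x hx y hy hxy =>
    hinjσ (Finset.mem_coe.mpr hx) (Finset.mem_coe.mpr hy) hxy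
  constructor
  · rw [hT, Finset.sum_union hd, Finset.sum_image hiτ, Finset.sum_image hiσ]
  · rw [hT, Finset.card_union_of_disjoint hd, Finset.card_image_of_injOn hinjτ,
      Finset.card_image_of_injOn hinjσ]

section Forward
variable {m n : ℕ} {b e a : ℕ → ℤ} {σ τ : ℕ → ℕ} {Γ : ℕ → ℕ → ℕ}

lemma forward (hm : 1 ≤ m) (hn : 1 ≤ n)
    (hb : Incr b m) (he : Incr e (m + n)) (ha : Incr a n)
    (hD : IsBalDatum b e a m n σ τ Γ) : RealizCrit b e a m n := by
  obtain ⟨hσmem, hτmem, hσinj, hτinj, hdisj, hcover, hsupp, hrow, hcol⟩ := hD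
  have hrow0 : ∀ i ∈ Icc 1 m, 0 ≤ e (τ i) - b i := by
    intro i hi
    rw [← hrow i hi]
    exact Finset.sum_nonneg fun j _ => by positivity
  have hcol0 : ∀ j ∈ Icc 1 n, 0 ≤ a j - e (σ j) := by
    intro j hj
    rw [← hcol j hj]
    exact Finset.sum_nonneg fun i _ => by positivity
  have hfull : Icc 1 (m + n) = (Icc 1 m).image τ ∪ (Icc 1 n).image σ := by
    apply Finset.Subset.antisymm
    · intro x hx
      rcases hcover x hx with ⟨j, hj, rfl⟩ | ⟨i, hi, rfl⟩
      · exact Finset.mem_union_right _ (Finset.mem_image_of_mem σ hj)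
      · exact Finset.mem_union_left _ (Finset.mem_image_of_mem τ hi)
    · intro x hx
      rcases Finset.mem_union.mp hx with hx | hx
      · obtain ⟨i, hi, rfl⟩ := Finset.mem_image.mp hx; exact hτmem i hi
      · obtain ⟨j, hj, rfl⟩ := Finset.mem_image.mp hx; exact hσmem j hj
  obtain ⟨hsplit_e, -⟩ := sum_split e σ τ (Icc 1 m) (Icc 1 n) hτinj hσinj hdisj _ hfull
  -- degree condition
  have hdeg : degT a n + degT b m = degT e (m + n) := by
    have h1 : ∑ j ∈ Icc 1 n, (a j - e (σ j)) = ∑ i ∈ Icc 1 m, (e (τ i) - b i) := by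
      calc ∑ j ∈ Icc 1 n, (a j - e (σ j)) = ∑ j ∈ Icc 1 n, ∑ i ∈ Icc 1 m, (Γ i j : ℤ) :=
            Finset.sum_congr rfl (fun j hj => (hcol j hj).symm)
        _ = ∑ i ∈ Icc 1 m, ∑ j ∈ Icc 1 n, (Γ i j : ℤ) := Finset.sum_comm
        _ = ∑ i ∈ Icc 1 m, (e (τ i) - b i) := Finset.sum_congr rfl (fun i hi => hrow i hi)
    rw [Finset.sum_sub_distrib, Finset.sum_sub_distrib] at h1
    unfold degT
    linarith [hsplit_e]
  -- pointwise a_i ≥ e_i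
  have hae : ∀ i, 1 ≤ i → i ≤ n → e i ≤ a i := by
    intro i h1 h2
    have hsub : Icc 1 i ⊆ Icc 1 n := Finset.Icc_subset_Icc le_rfl h2
    set Q := (Icc 1 i).image σ with hQ
    have hQcard : Q.card = i := by
      rw [Finset.card_image_of_injOn (hσinj.mono (Finset.coe_subset.mpr hsub))]
      simp [Nat.card_Icc]
    have hQne : Q.Nonempty := by rw [← Finset.card_pos, hQcard]; omega
    have hMQ : Q.max' hQne ∈ Q := Q.max'_mem hQne
    obtain ⟨j, hj, hjM⟩ := Finset.mem_image.mp hMQ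
    have hQsub : Q ⊆ Icc 1 (m + n) := by
      intro x hx; obtain ⟨k, hk, rfl⟩ := Finset.mem_image.mp hx; exact hσmem k (hsub hk)
    have hQsub2 : Q ⊆ Icc 1 (Q.max' hQne) := fun x hx =>
      mem_Icc.mpr ⟨(mem_Icc.mp (hQsub hx)).1, Q.le_max' x hx⟩
    have hiM : i ≤ Q.max' hQne := by
      have := Finset.card_le_card hQsub2
      rw [hQcard] at this; simp [Nat.card_Icc] at this; omega
    have hMmn : Q.max' hQne ≤ m + n := (mem_Icc.mp (hQsub hMQ)).2
    obtain ⟨hj1, hj2⟩ := mem_Icc.mp hj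
    calc e i ≤ e (Q.max' hQne) := he i _ h1 hiM hMmn
      _ = e (σ j) := by rw [hjM]
      _ ≤ a j := by have := hcol0 j (hsub hj); linarith
      _ ≤ a i := ha j i hj1 hj2 h2
  -- pointwise b_i ≤ e (n+i)
  have hbe : ∀ i, 1 ≤ i → i ≤ m → b i ≤ e (n + i) := by
    intro i h1 h2
    have hsub : Icc i m ⊆ Icc 1 m := Finset.Icc_subset_Icc (by omega) le_rfl
    set Q := (Icc i m).image τ with hQ
    have hQcard : Q.card = m + 1 - i := by
      rw [Finset.card_image_of_injOn (hτinj.mono (Finset.coe_subset.mpr hsub))]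
      simp [Nat.card_Icc]
    have hQne : Q.Nonempty := by rw [← Finset.card_pos, hQcard]; omega
    have htQ : Q.min' hQne ∈ Q := Q.min'_mem hQne
    obtain ⟨j, hj, hjt⟩ := Finset.mem_image.mp htQ
    have hQsub : Q ⊆ Icc 1 (m + n) := by
      intro x hx; obtain ⟨k, hk, rfl⟩ := Finset.mem_image.mp hx; exact hτmem k (hsub hk)
    have hQsub2 : Q ⊆ Icc (Q.min' hQne) (m + n) := fun x hx =>
      mem_Icc.mpr ⟨Q.min'_le x hx, (mem_Icc.mp (hQsub hx)).2⟩
    have hcard2 := Finset.card_le_card hQsub2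
    have ht1 : 1 ≤ Q.min' hQne := (mem_Icc.mp (hQsub htQ)).1
    have htn : Q.min' hQne ≤ n + i := by
      rw [hQcard] at hcard2; simp [Nat.card_Icc] at hcard2; omega
    obtain ⟨hj1, hj2⟩ := mem_Icc.mp hj
    calc b i ≤ b j := hb i j h1 hj1 hj2
      _ ≤ e (τ j) := by have := hrow0 j (mem_Icc.mpr ⟨by omega, hj2⟩); linarith
      _ = e (Q.min' hQne) := by rw [hjt]
      _ ≤ e (n + i) := he _ (n + i) ht1 htn (by omega)
  -- the key inequality coming from the datum, for every cutoff value v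
  have star : ∀ v : ℤ,
      ((Icc 1 (m + n)).filter (fun k => v ≤ e k)) =
        Icc (m + n + 1 - (((Icc 1 m).filter (fun i => v ≤ e (τ i))).card +
          ((Icc 1 n).filter (fun j => v ≤ e (σ j))).card)) (m + n) ∧
      0 ≤ Sfun b e a m n (m + 1 - ((Icc 1 m).filter (fun i => v ≤ e (τ i))).card)
          (n + 1 - ((Icc 1 n).filter (fun j => v ≤ e (σ j))).card) := by
    intro v
    set Ms := (Icc 1 m).filter (fun i => v ≤ e (τ i)) with hMsdef
    set Ns := (Icc 1 n).filter (fun j => v ≤ e (σ j)) with hNsdef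
    set T := (Icc 1 (m + n)).filter (fun k => v ≤ e k) with hTdef
    have hMsub : Ms ⊆ Icc 1 m := Finset.filter_subset _ _
    have hNsub : Ns ⊆ Icc 1 n := Finset.filter_subset _ _
    have hTsub : T ⊆ Icc 1 (m + n) := Finset.filter_subset _ _
    have hpm : Ms.card ≤ m := by
      have := Finset.card_le_card hMsub; simpa [Nat.card_Icc] using this
    have hqn : Ns.card ≤ n := by
      have := Finset.card_le_card hNsub; simpa [Nat.card_Icc] using this
    have hTeq : T = Ms.image τ ∪ Ns.image σ := by
      apply Finset.Subset.antisymm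
      · intro x hx
        obtain ⟨hx1, hx2⟩ := Finset.mem_filter.mp hx
        rcases hcover x hx1 with ⟨j, hj, rfl⟩ | ⟨i, hi, rfl⟩
        · exact Finset.mem_union_right _
            (Finset.mem_image_of_mem σ (Finset.mem_filter.mpr ⟨hj, hx2⟩))
        · exact Finset.mem_union_left _
            (Finset.mem_image_of_mem τ (Finset.mem_filter.mpr ⟨hi, hx2⟩))
      · intro x hx
        rcases Finset.mem_union.mp hx with hx | hx
        · obtain ⟨i, hi, rfl⟩ := Finset.mem_image.mp hx
          obtain ⟨hi1, hi2⟩ := Finset.mem_filter.mp hi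
          exact Finset.mem_filter.mpr ⟨hτmem i hi1, hi2⟩
        · obtain ⟨j, hj, rfl⟩ := Finset.mem_image.mp hx
          obtain ⟨hj1, hj2⟩ := Finset.mem_filter.mp hj
          exact Finset.mem_filter.mpr ⟨hσmem j hj1, hj2⟩
    obtain ⟨hsum, hcard⟩ := sum_split e σ τ Ms Ns
      (hτinj.mono (Finset.coe_subset.mpr hMsub)) (hσinj.mono (Finset.coe_subset.mpr hNsub))
      (fun i hi j hj => hdisj i (hMsub hi) j (hNsub hj)) T hTeq
    have hTIcc : T = Icc (m + n + 1 - T.card) (m + n) := by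
      apply up_closed_eq_Icc (m + n) T hTsub
      intro i j hi hij hj
      obtain ⟨hi1, hi2⟩ := Finset.mem_filter.mp hi
      exact Finset.mem_filter.mpr ⟨mem_Icc.mpr ⟨le_trans (mem_Icc.mp hi1).1 hij, hj⟩,
        le_trans hi2 (he i j (mem_Icc.mp hi1).1 hij hj)⟩
    refine ⟨by rw [← hcard]; exact hTIcc, ?_⟩
    have hineq : ∑ i ∈ Ms, (e (τ i) - b i) ≤ ∑ j ∈ Ns, (a j - e (σ j)) := by
      calc ∑ i ∈ Ms, (e (τ i) - b i) = ∑ i ∈ Ms, ∑ j ∈ Icc 1 n, (Γ i j : ℤ) :=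
            Finset.sum_congr rfl (fun i hi => (hrow i (hMsub hi)).symm)
        _ = ∑ j ∈ Icc 1 n, ∑ i ∈ Ms, (Γ i j : ℤ) := Finset.sum_comm
        _ = ∑ j ∈ Ns, ∑ i ∈ Ms, (Γ i j : ℤ) := by
            apply (Finset.sum_subset hNsub ?_).symm
            intro j hj hjN
            apply Finset.sum_eq_zero
            intro i hi
            by_contra hΓ
            have hΓ' : Γ i j ≠ 0 := by
              intro h0; exact hΓ (by rw [h0]; simp)
            obtain ⟨-, h2, -, -, -⟩ := hsupp i (hMsub hi) j hj hΓ'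
            have hv : v ≤ e (τ i) := (Finset.mem_filter.mp hi).2
            exact hjN (Finset.mem_filter.mpr ⟨hj, le_trans hv h2⟩)
        _ ≤ ∑ j ∈ Ns, (a j - e (σ j)) := by
            apply Finset.sum_le_sum
            intro j hj
            rw [← hcol j (hNsub hj)]
            apply Finset.sum_le_sum_of_subset_of_nonneg hMsub
            intro i _ _; positivity
    have hbtop : ∑ i ∈ Ms, b i ≤ ∑ i ∈ Icc (m + 1 - Ms.card) m, b i :=
      sum_le_top_segment b m hb Ms hMsub
    have hatop : ∑ j ∈ Ns, a j ≤ ∑ j ∈ Icc (n + 1 - Ns.card) n, a j :=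
      sum_le_top_segment a n ha Ns hNsub
    unfold Sfun
    have hidx : (m + 1 - Ms.card) + (n + 1 - Ns.card) - 1 = m + n + 1 - (Ms.card + Ns.card) := by
      omega
    rw [hidx]
    have hTe : ∑ k ∈ Icc (m + n + 1 - (Ms.card + Ns.card)) (m + n), e k
        = ∑ i ∈ Ms, e (τ i) + ∑ j ∈ Ns, e (σ j) := by
      rw [← hcard, ← hTIcc]; exact hsum
    rw [hTe]
    rw [Finset.sum_sub_distrib, Finset.sum_sub_distrib] at hineq
    linarith
  -- the criterion
  refine ⟨⟨hdeg, hae, hbe⟩, ?_⟩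
  have hcritB : ∀ μ ν, 1 ≤ μ → μ ≤ m → 1 ≤ ν → ν ≤ n → hfun b e a m n μ ≤ ν →
      0 ≤ Bfun b e μ ν := by
    intro μ ν hμ1 hμ2 hν1 hν2 hνh
    by_contra hc
    rw [Bfun, not_le] at hc
    obtain ⟨hTIcc, hS⟩ := star (b μ)
    set p := ((Icc 1 m).filter (fun i => b μ ≤ e (τ i))).card with hpdef
    set q := ((Icc 1 n).filter (fun j => b μ ≤ e (σ j))).card with hqdef
    have hpm : p ≤ m := by
      have := Finset.card_le_card (Finset.filter_subset (fun i => b μ ≤ e (τ i)) (Icc 1 m))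
      simpa [Nat.card_Icc] using this
    have hqn : q ≤ n := by
      have := Finset.card_le_card (Finset.filter_subset (fun j => b μ ≤ e (σ j)) (Icc 1 n))
      simpa [Nat.card_Icc] using this
    have hpμ : m - μ + 1 ≤ p := by
      have hsub : Icc μ m ⊆ (Icc 1 m).filter (fun i => b μ ≤ e (τ i)) := by
        intro i hi
        obtain ⟨hi1, hi2⟩ := mem_Icc.mp hi
        refine Finset.mem_filter.mpr ⟨mem_Icc.mpr ⟨by omega, hi2⟩, ?_⟩
        have h1 := hrow0 i (mem_Icc.mpr ⟨by omega, hi2⟩)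
        have h2 := hb μ i hμ1 hi1 hi2
        linarith
      have := Finset.card_le_card hsub
      rw [← hpdef] at this
      simp [Nat.card_Icc] at this
      omega
    have ht0 : μ + ν ≤ m + n + 1 - (p + q) := by
      by_contra hc2
      push_neg at hc2
      have hmem : μ + ν - 1 ∈ Icc (m + n + 1 - (p + q)) (m + n) :=
        mem_Icc.mpr ⟨by omega, by omega⟩
      rw [← hTIcc] at hmem
      have := (Finset.mem_filter.mp hmem).2
      linarith
    have hS2 : 0 ≤ Sfun b e a m n μ (n + 1 - q) := by
      apply S_mono_mu b e a m n (μ0 := m + 1 - p) (ν := n + 1 - q)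
        (by omega) (by omega) (by omega) μ (by omega) (by omega) ?_ hS
      intro μ' hμ'1 hμ'2
      have h1 : b μ' ≤ b μ := hb μ' μ (by omega) (by omega) hμ2
      have hmem : μ' + (n + 1 - q) - 1 ∈ Icc (m + n + 1 - (p + q)) (m + n) :=
        mem_Icc.mpr ⟨by omega, by omega⟩
      rw [← hTIcc] at hmem
      have := (Finset.mem_filter.mp hmem).2
      linarith
    have hneg := hfun_neg b e a m n μ (n + 1 - q) (by omega) (by omega)
    linarith
  intro μ ν hμ1 hμ2 hν1 hν2 hνh
  refine ⟨?_, hcritB μ ν hμ1 hμ2 hν1 hν2 hνh⟩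
  -- the A inequality
  by_contra hc
  rw [Afun, not_le] at hc
  obtain ⟨hTIcc, hS⟩ := star (e (μ + ν))
  set p := ((Icc 1 m).filter (fun i => e (μ + ν) ≤ e (τ i))).card with hpdef
  set q := ((Icc 1 n).filter (fun j => e (μ + ν) ≤ e (σ j))).card with hqdef
  have hpm : p ≤ m := by
    have := Finset.card_le_card (Finset.filter_subset (fun i => e (μ + ν) ≤ e (τ i)) (Icc 1 m))
    simpa [Nat.card_Icc] using this
  have hqν : q ≤ n - ν := by
    have hsub : (Icc 1 n).filter (fun j => e (μ + ν) ≤ e (σ j)) ⊆ Icc (ν + 1) n := by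
      intro j hj
      obtain ⟨hj1, hj2⟩ := Finset.mem_filter.mp hj
      obtain ⟨hj3, hj4⟩ := mem_Icc.mp hj1
      refine mem_Icc.mpr ⟨?_, hj4⟩
      by_contra hc3
      push_neg at hc3
      have h1 := hcol0 j hj1
      have h2 := ha j ν hj3 (by omega) hν2
      linarith
    have := Finset.card_le_card hsub
    rw [← hqdef] at this
    simp [Nat.card_Icc] at this
    omega
  have ht0 : m + n + 1 - (p + q) ≤ μ + ν := by
    have hmem : μ + ν ∈ (Icc 1 (m + n)).filter (fun k => e (μ + ν) ≤ e k) :=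
      Finset.mem_filter.mpr ⟨mem_Icc.mpr ⟨by omega, by omega⟩, le_refl _⟩
    rw [hTIcc] at hmem
    exact (mem_Icc.mp hmem).1
  have hBμν := hcritB μ ν hμ1 hμ2 hν1 hν2 hνh
  rw [Bfun] at hBμν
  have heμν : e (μ + ν - 1) ≤ e (μ + ν) := he (μ + ν - 1) (μ + ν) (by omega) (by omega) (by omega)
  have hS2 : 0 ≤ Sfun b e a m n μ (n + 1 - q) := by
    apply S_mono_mu b e a m n (μ0 := m + 1 - p) (ν := n + 1 - q)
      (by omega) (by omega) (by omega) μ (by omega) (by omega) ?_ hS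
    intro μ' hμ'1 hμ'2
    have h1 : b μ' ≤ b μ := hb μ' μ (by omega) (by omega) hμ2
    have hmem : μ' + (n + 1 - q) - 1 ∈ Icc (m + n + 1 - (p + q)) (m + n) :=
      mem_Icc.mpr ⟨by omega, by omega⟩
    rw [← hTIcc] at hmem
    have := (Finset.mem_filter.mp hmem).2
    linarith
  have hneg := hfun_neg b e a m n μ (n + 1 - q) (by omega) (by omega)
  linarith

end Forward

section Backward
variable {m n : ℕ} {b e a : ℕ → ℤ}

lemma hfun_step (hm : 1 ≤ m) (hn : 1 ≤ n)
    (hb : Incr b m) (he : Incr e (m + n)) (ha : Incr a n)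
    (hcrit : RealizCrit b e a m n) {μ : ℕ} (h1 : 1 ≤ μ) (h2 : μ + 1 ≤ m) :
    hfun b e a m n μ ≤ hfun b e a m n (μ + 1) := by
  obtain ⟨⟨hdeg, hae, hbe⟩, hAB⟩ := hcrit
  by_contra hlt
  push_neg at hlt
  set ν := hfun b e a m n μ with hν
  have hν2 : ν ≤ n + 1 := hfun_le b e a m n μ
  have hν1 : 2 ≤ ν := by
    have := hfun_ge_one b e a m n (μ + 1)
    omega
  have hSneg := hfun_neg b e a m n (μ + 1) ν (by omega) hν2
  have hSpos := hfun_S_nonneg b e a m n (μ := μ) (by omega)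
  have hrec := Srec_mu b e a m n (μ := μ) (ν := ν) (by omega) (by omega) (by omega) hν2
  have hbμ : b μ ≤ e (μ + ν - 1) := by
    rcases Nat.lt_or_ge ν (n + 1) with hcase | hcase
    · have := (hAB μ ν (by omega) (by omega) (by omega) (by omega) le_rfl).2
      rw [Bfun] at this
      linarith
    · have hν3 : ν = n + 1 := by omega
      have := hbe μ (by omega) (by omega)
      have heq : μ + ν - 1 = n + μ := by omega
      rw [heq]
      exact this
  rw [← hν] at hSpos
  linarith

lemma hfun_mono (hm : 1 ≤ m) (hn : 1 ≤ n)
    (hb : Incr b m) (he : Incr e (m + n)) (ha : Incr a n)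
    (hcrit : RealizCrit b e a m n) {μ μ' : ℕ} (h1 : 1 ≤ μ) (h2 : μ ≤ μ') (h3 : μ' ≤ m) :
    hfun b e a m n μ ≤ hfun b e a m n μ' := by
  have key : ∀ d μ0, 1 ≤ μ0 → μ0 + d ≤ m →
      hfun b e a m n μ0 ≤ hfun b e a m n (μ0 + d) := by
    intro d
    induction d with
    | zero => intro μ0 _ _; simp
    | succ k ih =>
      intro μ0 hμ1 hμ2
      have i1 := ih μ0 hμ1 (by omega)
      have i2 := hfun_step hm hn hb he ha hcrit (μ := μ0 + k) (by omega) (by omega)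
      calc hfun b e a m n μ0 ≤ hfun b e a m n (μ0 + k) := i1
        _ ≤ hfun b e a m n (μ0 + k + 1) := i2
  have heq : μ + (μ' - μ) = μ' := by omega
  have := key (μ' - μ) μ h1 (by omega)
  rw [heq] at this
  exact this
end Backward

lemma sum_Icc_telescope (f : ℕ → ℤ) (n : ℕ) :
    ∑ ν ∈ Icc 1 n, (f ν - f (ν + 1)) = f 1 - f (n + 1) := by
  induction n with
  | zero => simp
  | succ k ih =>
    rw [Finset.sum_Icc_succ_top (by omega : 1 ≤ k + 1), ih]
    ring

section Backward2
variable {m n : ℕ} {b e a : ℕ → ℤ}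

lemma backward (hm : 1 ≤ m) (hn : 1 ≤ n)
    (hb : Incr b m) (he : Incr e (m + n)) (ha : Incr a n)
    (hcrit : RealizCrit b e a m n) : HasBalDatum b e a m n := by
  classical
  obtain ⟨⟨hdeg, hae, hbe⟩, hAB⟩ := id hcrit
  set τf : ℕ → ℕ := fun μ => μ + hfun b e a m n μ - 1 with hτf
  set cf : ℕ → ℕ := fun ν => ((Icc 1 m).filter (fun μ => hfun b e a m n μ ≤ ν)).card with hcf
  set σf : ℕ → ℕ := fun ν => ν + cf ν with hσf
  have hτval : ∀ μ, τf μ = μ + hfun b e a m n μ - 1 := fun μ => rfl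
  have hσval : ∀ ν, σf ν = ν + cf ν := fun ν => rfl
  have hcval : ∀ ν, cf ν = ((Icc 1 m).filter (fun μ => hfun b e a m n μ ≤ ν)).card :=
    fun ν => rfl
  have hcm : ∀ ν, cf ν ≤ m := by
    intro ν
    have h := Finset.card_le_card
      (Finset.filter_subset (fun μ => hfun b e a m n μ ≤ ν) (Icc 1 m))
    rw [hcval]
    simpa [Nat.card_Icc] using h
  have hcchar : ∀ ν μ, 1 ≤ μ → μ ≤ m → (hfun b e a m n μ ≤ ν ↔ μ ≤ cf ν) := by
    intro ν μ h1 h2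
    have hdc := down_closed_eq_Icc m ((Icc 1 m).filter (fun μ => hfun b e a m n μ ≤ ν))
      (Finset.filter_subset _ _) ?_
    constructor
    · intro hle
      have hmem : μ ∈ (Icc 1 m).filter (fun μ => hfun b e a m n μ ≤ ν) :=
        Finset.mem_filter.mpr ⟨mem_Icc.mpr ⟨h1, h2⟩, hle⟩
      rw [hdc] at hmem
      rw [hcval]
      exact (mem_Icc.mp hmem).2
    · intro hle
      rw [hcval] at hle
      have hmem : μ ∈ Icc 1 ((Icc 1 m).filter (fun μ => hfun b e a m n μ ≤ ν)).card :=
        mem_Icc.mpr ⟨h1, hle⟩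
      rw [← hdc] at hmem
      exact (Finset.mem_filter.mp hmem).2
    · intro i j hi hij hj
      obtain ⟨hj1, hj2⟩ := Finset.mem_filter.mp hj
      refine Finset.mem_filter.mpr ⟨mem_Icc.mpr ⟨hi, le_trans hij (mem_Icc.mp hj1).2⟩, ?_⟩
      exact le_trans (hfun_mono hm hn hb he ha hcrit hi hij (mem_Icc.mp hj1).2) hj2
  have hcmono : ∀ ν ν', ν ≤ ν' → cf ν ≤ cf ν' := by
    intro ν ν' hνν'
    rw [hcval, hcval]
    apply Finset.card_le_card
    intro x hx
    obtain ⟨hx1, hx2⟩ := Finset.mem_filter.mp hx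
    exact Finset.mem_filter.mpr ⟨hx1, le_trans hx2 hνν'⟩
  have hτmem : ∀ μ ∈ Icc 1 m, τf μ ∈ Icc 1 (m + n) := by
    intro μ hμ
    obtain ⟨h1, h2⟩ := mem_Icc.mp hμ
    have g1 := hfun_ge_one b e a m n μ
    have g2 := hfun_le b e a m n μ
    rw [hτval]
    exact mem_Icc.mpr ⟨by omega, by omega⟩
  have hσmem : ∀ ν ∈ Icc 1 n, σf ν ∈ Icc 1 (m + n) := by
    intro ν hν
    obtain ⟨h1, h2⟩ := mem_Icc.mp hν
    have := hcm ν
    rw [hσval]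
    exact mem_Icc.mpr ⟨by omega, by omega⟩
  have hτsm : ∀ μ μ', 1 ≤ μ → μ < μ' → μ' ≤ m → τf μ < τf μ' := by
    intro μ μ' h1 h2 h3
    have := hfun_mono hm hn hb he ha hcrit h1 (le_of_lt h2) h3
    have := hfun_ge_one b e a m n μ
    rw [hτval, hτval]
    omega
  have hσsm : ∀ ν ν', ν < ν' → σf ν < σf ν' := by
    intro ν ν' h
    have := hcmono ν ν' (le_of_lt h)
    rw [hσval, hσval]
    omega
  have hinjτ : Set.InjOn τf ↑(Icc 1 m) := by
    intro x hx y hy hxy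
    simp only [Finset.coe_Icc, Set.mem_Icc] at hx hy
    by_contra hne
    rcases Nat.lt_or_ge x y with hlt | hge
    · exact absurd hxy (Nat.ne_of_lt (hτsm x y hx.1 hlt hy.2))
    · have : y < x := by omega
      exact absurd hxy.symm (Nat.ne_of_lt (hτsm y x hy.1 this hx.2))
  have hinjσ : Set.InjOn σf ↑(Icc 1 n) := by
    intro x hx y hy hxy
    by_contra hne
    rcases Nat.lt_or_ge x y with hlt | hge
    · exact absurd hxy (Nat.ne_of_lt (hσsm x y hlt))
    · have : y < x := by omega
      exact absurd hxy.symm (Nat.ne_of_lt (hσsm y x this))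
  have hdisj : ∀ μ ∈ Icc 1 m, ∀ ν ∈ Icc 1 n, τf μ ≠ σf ν := by
    intro μ hμ ν hν
    obtain ⟨hμ1, hμ2⟩ := mem_Icc.mp hμ
    obtain ⟨hν1, hν2⟩ := mem_Icc.mp hν
    have g1 := hfun_ge_one b e a m n μ
    rcases le_or_gt (hfun b e a m n μ) ν with hcase | hcase
    · have := (hcchar ν μ hμ1 hμ2).mp hcase
      rw [hτval, hσval]
      omega
    · have : ¬ (μ ≤ cf ν) := fun hle => absurd ((hcchar ν μ hμ1 hμ2).mpr hle) (by omega)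
      rw [hτval, hσval]
      omega
  -- coverage
  have hfull : (Icc 1 m).image τf ∪ (Icc 1 n).image σf = Icc 1 (m + n) := by
    apply Finset.eq_of_subset_of_card_le
    · intro x hx
      rcases Finset.mem_union.mp hx with hx | hx
      · obtain ⟨i, hi, rfl⟩ := Finset.mem_image.mp hx; exact hτmem i hi
      · obtain ⟨j, hj, rfl⟩ := Finset.mem_image.mp hx; exact hσmem j hj
    · obtain ⟨-, hcard⟩ := sum_split e σf τf (Icc 1 m) (Icc 1 n) hinjτ hinjσ hdisj _ rfl
      rw [hcard]
      simp [Nat.card_Icc]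
  have hcover : ∀ x ∈ Icc 1 (m + n),
      (∃ j ∈ Icc 1 n, σf j = x) ∨ ∃ i ∈ Icc 1 m, τf i = x := by
    intro x hx
    rw [← hfull] at hx
    rcases Finset.mem_union.mp hx with hx | hx
    · obtain ⟨i, hi, hix⟩ := Finset.mem_image.mp hx; exact Or.inr ⟨i, hi, hix⟩
    · obtain ⟨j, hj, hjx⟩ := Finset.mem_image.mp hx; exact Or.inl ⟨j, hj, hjx⟩
  -- P2, P3
  have hP2 : ∀ μ, 1 ≤ μ → μ ≤ m → b μ ≤ e (τf μ) := by
    intro μ h1 h2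
    have g1 := hfun_ge_one b e a m n μ
    have g2 := hfun_le b e a m n μ
    rcases Nat.lt_or_ge (hfun b e a m n μ) (n + 1) with hcase | hcase
    · have := (hAB μ (hfun b e a m n μ) h1 h2 (by omega) (by omega) le_rfl).2
      rw [Bfun] at this
      rw [hτval]
      linarith
    · have hh : hfun b e a m n μ = n + 1 := by omega
      have := hbe μ h1 h2
      rw [hτval, hh]
      have heq : μ + (n + 1) - 1 = n + μ := by omega
      rw [heq]
      exact this
  have hP3 : ∀ ν, 1 ≤ ν → ν ≤ n → e (σf ν) ≤ a ν := by
    intro ν h1 h2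
    rcases Nat.eq_zero_or_pos (cf ν) with hc0 | hc1
    · rw [hσval, hc0]
      simpa using hae ν h1 h2
    · have hcmν := hcm ν
      have hle : hfun b e a m n (cf ν) ≤ ν := (hcchar ν (cf ν) hc1 hcmν).mpr le_rfl
      have := (hAB (cf ν) ν hc1 hcmν h1 h2 hle).1
      rw [Afun] at this
      rw [hσval]
      have heq : ν + cf ν = cf ν + ν := by omega
      rw [heq]
      linarith
  -- suffix sums
  set Rf : ℕ → ℤ := fun μ => ∑ i ∈ Icc μ m, (e (τf i) - b i) with hRfdef
  set Cf : ℕ → ℤ := fun ν => ∑ i ∈ Icc ν n, (a i - e (σf i)) with hCfdef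
  have hRval : ∀ μ, Rf μ = ∑ i ∈ Icc μ m, (e (τf i) - b i) := fun μ => rfl
  have hCval : ∀ ν, Cf ν = ∑ i ∈ Icc ν n, (a i - e (σf i)) := fun ν => rfl
  have hRtop : Rf (m + 1) = 0 := by
    rw [hRval, Finset.Icc_eq_empty (by omega)]; simp
  have hCtop : Cf (n + 1) = 0 := by
    rw [hCval, Finset.Icc_eq_empty (by omega)]; simp
  have hRnn : ∀ μ, 1 ≤ μ → 0 ≤ Rf μ := by
    intro μ h1
    rw [hRval]
    apply Finset.sum_nonneg
    intro i hi
    obtain ⟨hi1, hi2⟩ := mem_Icc.mp hi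
    have := hP2 i (by omega) hi2
    linarith
  have hRdec : ∀ μ μ', 1 ≤ μ → μ ≤ μ' → Rf μ' ≤ Rf μ := by
    intro μ μ' h1 h2
    rw [hRval, hRval]
    apply Finset.sum_le_sum_of_subset_of_nonneg (Finset.Icc_subset_Icc h2 le_rfl)
    intro i hi _
    obtain ⟨hi1, hi2⟩ := mem_Icc.mp hi
    have := hP2 i (by omega) hi2
    linarith
  have hCnn : ∀ ν, 1 ≤ ν → 0 ≤ Cf ν := by
    intro ν h1
    rw [hCval]
    apply Finset.sum_nonneg
    intro i hi
    obtain ⟨hi1, hi2⟩ := mem_Icc.mp hi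
    have := hP3 i (by omega) hi2
    linarith
  have hCdec : ∀ ν ν', 1 ≤ ν → ν ≤ ν' → Cf ν' ≤ Cf ν := by
    intro ν ν' h1 h2
    rw [hCval, hCval]
    apply Finset.sum_le_sum_of_subset_of_nonneg (Finset.Icc_subset_Icc h2 le_rfl)
    intro i hi _
    obtain ⟨hi1, hi2⟩ := mem_Icc.mp hi
    have := hP3 i (by omega) hi2
    linarith
  have hRrec : ∀ μ, 1 ≤ μ → μ ≤ m → Rf μ = (e (τf μ) - b μ) + Rf (μ + 1) := by
    intro μ h1 h2
    rw [hRval, hRval, sum_Icc_bot _ μ m h2]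
  have hCrec : ∀ ν, 1 ≤ ν → ν ≤ n → Cf ν = (a ν - e (σf ν)) + Cf (ν + 1) := by
    intro ν h1 h2
    rw [hCval, hCval, sum_Icc_bot _ ν n h2]
  -- total masses agree
  have hRC : Rf 1 = Cf 1 := by
    obtain ⟨hs, -⟩ := sum_split e σf τf (Icc 1 m) (Icc 1 n) hinjτ hinjσ hdisj _ hfull.symm
    rw [hRval, hCval, Finset.sum_sub_distrib, Finset.sum_sub_distrib]
    unfold degT at hdeg
    linarith
  have hS11 : Sfun b e a m n 1 1 = 0 := by
    unfold Sfun
    unfold degT at hdeg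
    norm_num
    linarith
  -- the key nonnegativity
  have hKEY : ∀ μ0 ν0, 1 ≤ μ0 → μ0 ≤ m → 1 ≤ ν0 → ν0 ≤ n + 1 →
      ν0 ≤ hfun b e a m n μ0 → (μ0 = 1 ∨ hfun b e a m n (μ0 - 1) ≤ ν0) →
      0 ≤ Sfun b e a m n μ0 ν0 := by
    intro μ0 ν0 h1 h2 h3 h4 h5 h6
    rcases Nat.lt_or_ge (hfun b e a m n μ0) 2 with hsm | hlg
    · have hh1 : hfun b e a m n μ0 = 1 := by
        have := hfun_ge_one b e a m n μ0; omega
      have hν01 : ν0 = 1 := by omega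
      subst hν01
      apply S_mono_mu b e a m n (μ0 := 1) (ν := 1) le_rfl le_rfl (by omega) μ0 h1 (by omega)
        ?_ (by rw [hS11])
      intro μ' hμ'1 hμ'2
      have hhμ' : hfun b e a m n μ' = 1 := by
        have g1 := hfun_mono hm hn hb he ha hcrit (μ := μ') (μ' := μ0) hμ'1 (by omega) h2
        have g2 := hfun_ge_one b e a m n μ'
        omega
      have hp := hP2 μ' hμ'1 (by omega)
      rw [hτval, hhμ'] at hp
      have heq : μ' + 1 - 1 = μ' := by omega
      rw [heq] at hp
      exact hp
    · have hS0 := hfun_S_nonneg b e a m n (μ := μ0) hlg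
      apply S_desc_nu b e a m n (μ := μ0) (ν0 := ν0) h1 (by omega) h3
        (hfun b e a m n μ0) h5 (hfun_le b e a m n μ0) ?_ hS0
      intro ν hν1 hν2
      have hν' : 1 ≤ ν := by omega
      have hνn : ν ≤ n := by
        have := hfun_le b e a m n μ0; omega
      have hcν : μ0 - 1 ≤ cf ν := by
        rcases Nat.lt_or_ge μ0 2 with hμ02 | hμ02
        · omega
        · rcases h6 with h6 | h6
          · omega
          · exact (hcchar ν (μ0 - 1) (by omega) (by omega)).mp (by omega)
      have hσν : μ0 + ν - 1 ≤ σf ν := by rw [hσval]; omega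
      have hσn : σf ν ≤ m + n := by
        rw [hσval]; have := hcm ν; omega
      calc e (μ0 + ν - 1) ≤ e (σf ν) := he _ _ (by omega) hσν hσn
        _ ≤ a ν := hP3 ν hν' hνn
  -- the value-cut inequality
  have hVC : ∀ v : ℤ, (∃ μx, 1 ≤ μx ∧ μx ≤ m ∧ v ≤ e (τf μx)) →
      ∃ p q : ℕ, 1 ≤ p ∧ p ≤ m ∧ q ≤ n ∧
        ((Icc 1 m).filter (fun μ => v ≤ e (τf μ))) = Icc (m + 1 - p) m ∧
        ((Icc 1 n).filter (fun ν => v ≤ e (σf ν))) = Icc (n + 1 - q) n ∧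
        Rf (m + 1 - p) ≤ Cf (n + 1 - q) := by
    intro v hex
    obtain ⟨μx, hμx1, hμx2, hμxv⟩ := hex
    set Mv := (Icc 1 m).filter (fun μ => v ≤ e (τf μ)) with hMvdef
    set Nv := (Icc 1 n).filter (fun ν => v ≤ e (σf ν)) with hNvdef
    set Tv := (Icc 1 (m + n)).filter (fun k => v ≤ e k) with hTvdef
    have hMsub : Mv ⊆ Icc 1 m := Finset.filter_subset _ _
    have hNsub : Nv ⊆ Icc 1 n := Finset.filter_subset _ _
    have hTsub : Tv ⊆ Icc 1 (m + n) := Finset.filter_subset _ _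
    have hMIcc : Mv = Icc (m + 1 - Mv.card) m := up_closed_eq_Icc m Mv hMsub (by
      intro i j hi hij hj
      obtain ⟨hi1, hi2⟩ := Finset.mem_filter.mp hi
      obtain ⟨hi3, hi4⟩ := mem_Icc.mp hi1
      refine Finset.mem_filter.mpr ⟨mem_Icc.mpr ⟨by omega, hj⟩, ?_⟩
      rcases Nat.eq_or_lt_of_le hij with rfl | hlt
      · exact hi2
      · have hmem1 := hτmem i hi1
        have hmem2 := hτmem j (mem_Icc.mpr ⟨by omega, hj⟩)
        have := he (τf i) (τf j) (mem_Icc.mp hmem1).1 (le_of_lt (hτsm i j hi3 hlt hj))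
          (mem_Icc.mp hmem2).2
        linarith)
    have hNIcc : Nv = Icc (n + 1 - Nv.card) n := up_closed_eq_Icc n Nv hNsub (by
      intro i j hi hij hj
      obtain ⟨hi1, hi2⟩ := Finset.mem_filter.mp hi
      obtain ⟨hi3, hi4⟩ := mem_Icc.mp hi1
      refine Finset.mem_filter.mpr ⟨mem_Icc.mpr ⟨by omega, hj⟩, ?_⟩
      rcases Nat.eq_or_lt_of_le hij with rfl | hlt
      · exact hi2
      · have hmem1 := hσmem i hi1
        have hmem2 := hσmem j (mem_Icc.mpr ⟨by omega, hj⟩)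
        have := he (σf i) (σf j) (mem_Icc.mp hmem1).1 (le_of_lt (hσsm i j hlt))
          (mem_Icc.mp hmem2).2
        linarith)
    have hTIcc : Tv = Icc (m + n + 1 - Tv.card) (m + n) := up_closed_eq_Icc (m + n) Tv hTsub (by
      intro i j hi hij hj
      obtain ⟨hi1, hi2⟩ := Finset.mem_filter.mp hi
      exact Finset.mem_filter.mpr ⟨mem_Icc.mpr ⟨le_trans (mem_Icc.mp hi1).1 hij, hj⟩,
        le_trans hi2 (he i j (mem_Icc.mp hi1).1 hij hj)⟩)
    have hTeq : Tv = Mv.image τf ∪ Nv.image σf := by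
      apply Finset.Subset.antisymm
      · intro x hx
        obtain ⟨hx1, hx2⟩ := Finset.mem_filter.mp hx
        rcases hcover x hx1 with ⟨j, hj, rfl⟩ | ⟨i, hi, rfl⟩
        · exact Finset.mem_union_right _
            (Finset.mem_image_of_mem σf (Finset.mem_filter.mpr ⟨hj, hx2⟩))
        · exact Finset.mem_union_left _
            (Finset.mem_image_of_mem τf (Finset.mem_filter.mpr ⟨hi, hx2⟩))
      · intro x hx
        rcases Finset.mem_union.mp hx with hx | hx
        · obtain ⟨i, hi, rfl⟩ := Finset.mem_image.mp hx
          obtain ⟨hi1, hi2⟩ := Finset.mem_filter.mp hi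
          exact Finset.mem_filter.mpr ⟨hτmem i hi1, hi2⟩
        · obtain ⟨j, hj, rfl⟩ := Finset.mem_image.mp hx
          obtain ⟨hj1, hj2⟩ := Finset.mem_filter.mp hj
          exact Finset.mem_filter.mpr ⟨hσmem j hj1, hj2⟩
    obtain ⟨hsumTv, hcardTv⟩ := sum_split e σf τf Mv Nv
      (hinjτ.mono (Finset.coe_subset.mpr hMsub)) (hinjσ.mono (Finset.coe_subset.mpr hNsub))
      (fun i hi j hj => hdisj i (hMsub hi) j (hNsub hj)) Tv hTeq
    set p := Mv.card with hpdef
    set q := Nv.card with hqdef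
    have hpm : p ≤ m := by
      have := Finset.card_le_card hMsub; simpa [Nat.card_Icc] using this
    have hqn : q ≤ n := by
      have := Finset.card_le_card hNsub; simpa [Nat.card_Icc] using this
    have hp1 : 1 ≤ p := by
      have : μx ∈ Mv := Finset.mem_filter.mpr ⟨mem_Icc.mpr ⟨hμx1, hμx2⟩, hμxv⟩
      have := Finset.card_pos.mpr ⟨μx, this⟩
      omega
    refine ⟨p, q, hp1, hpm, hqn, hMIcc, hNIcc, ?_⟩
    -- τf (m+1-p) is in the top segment
    have hμ0Mv : (m + 1 - p) ∈ Mv := by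
      rw [hMIcc]; exact mem_Icc.mpr ⟨le_rfl, by omega⟩
    have hτμ0Tv : τf (m + 1 - p) ∈ Tv := by
      refine Finset.mem_filter.mpr ⟨hτmem _ (hMsub hμ0Mv), (Finset.mem_filter.mp hμ0Mv).2⟩
    rw [hTIcc, hcardTv] at hτμ0Tv
    have hτμ0ge : m + n + 1 - (p + q) ≤ τf (m + 1 - p) := (mem_Icc.mp hτμ0Tv).1
    have g1 := hfun_ge_one b e a m n (m + 1 - p)
    have hcondi : n + 1 - q ≤ hfun b e a m n (m + 1 - p) := by
      rw [hτval] at hτμ0ge; omega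
    have hcondii : m + 1 - p = 1 ∨ hfun b e a m n (m + 1 - p - 1) ≤ n + 1 - q := by
      rcases Nat.lt_or_ge (m + 1 - p) 2 with hc | hc
      · left; omega
      · right
        have hnotin : (m + 1 - p - 1) ∉ Mv := by
          rw [hMIcc]; intro hmem; have := (mem_Icc.mp hmem).1; omega
        have h1m : m + 1 - p - 1 ∈ Icc 1 m := mem_Icc.mpr ⟨by omega, by omega⟩
        have hnotv : ¬ v ≤ e (τf (m + 1 - p - 1)) := by
          intro hv; exact hnotin (Finset.mem_filter.mpr ⟨h1m, hv⟩)
        have hτnotin : τf (m + 1 - p - 1) ∉ Tv := by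
          intro hmem; exact hnotv (Finset.mem_filter.mp hmem).2
        have hτin1 := hτmem _ h1m
        rw [hTIcc, hcardTv] at hτnotin
        have : τf (m + 1 - p - 1) < m + n + 1 - (p + q) := by
          by_contra hcc
          exact hτnotin (mem_Icc.mpr ⟨by omega, (mem_Icc.mp hτin1).2⟩)
        rw [hτval] at this
        have g2 := hfun_ge_one b e a m n (m + 1 - p - 1)
        omega
    have hS := hKEY (m + 1 - p) (n + 1 - q) (by omega) (by omega) (by omega) (by omega)
      hcondi hcondii
    -- rewrite S as Cf - Rf
    have hidx : (m + 1 - p) + (n + 1 - q) - 1 = m + n + 1 - (p + q) := by omega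
    have hTe : ∑ k ∈ Icc ((m + 1 - p) + (n + 1 - q) - 1) (m + n), e k
        = ∑ i ∈ Mv, e (τf i) + ∑ j ∈ Nv, e (σf j) := by
      rw [hidx]
      have : m + n + 1 - (p + q) = m + n + 1 - Tv.card := by rw [hcardTv]
      rw [this, ← hTIcc]
      exact hsumTv
    have hSval : Sfun b e a m n (m + 1 - p) (n + 1 - q) = Cf (n + 1 - q) - Rf (m + 1 - p) := by
      unfold Sfun
      rw [hTe, hRval, hCval]
      have hM' : ∑ i ∈ Mv, e (τf i) = ∑ i ∈ Icc (m + 1 - p) m, e (τf i) :=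
        Finset.sum_congr hMIcc (fun _ _ => rfl)
      have hN' : ∑ j ∈ Nv, e (σf j) = ∑ j ∈ Icc (n + 1 - q) n, e (σf j) :=
        Finset.sum_congr hNIcc (fun _ _ => rfl)
      rw [hM', hN', Finset.sum_sub_distrib, Finset.sum_sub_distrib]
      ring
    rw [hSval] at hS
    linarith
  -- the transport matrix
  set Γf : ℕ → ℕ → ℕ :=
    fun μ ν => (min (Rf μ) (Cf ν) - max (Rf (μ + 1)) (Cf (ν + 1))).toNat with hΓfdef
  have hΓval : ∀ μ ν, (Γf μ ν : ℤ) =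
      max (min (Rf μ) (Cf ν) - max (Rf (μ + 1)) (Cf (ν + 1))) 0 := by
    intro μ ν
    have : Γf μ ν = (min (Rf μ) (Cf ν) - max (Rf (μ + 1)) (Cf (ν + 1))).toNat := rfl
    rw [this]
    omega
  -- row sums
  have hrowsum : ∀ μ ∈ Icc 1 m, (∑ ν ∈ Icc 1 n, (Γf μ ν : ℤ)) = e (τf μ) - b μ := by
    intro μ hμ
    obtain ⟨hμ1, hμ2⟩ := mem_Icc.mp hμ
    have hRμ : Rf (μ + 1) ≤ Rf μ := hRdec μ (μ + 1) hμ1 (by omega)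
    have hterm : ∀ ν ∈ Icc 1 n, (Γf μ ν : ℤ) =
        max (Rf (μ + 1)) (min (Rf μ) (Cf ν)) - max (Rf (μ + 1)) (min (Rf μ) (Cf (ν + 1))) := by
      intro ν hν
      obtain ⟨hν1, hν2⟩ := mem_Icc.mp hν
      have hCν : Cf (ν + 1) ≤ Cf ν := hCdec ν (ν + 1) hν1 (by omega)
      have := hΓval μ ν
      omega
    calc ∑ ν ∈ Icc 1 n, (Γf μ ν : ℤ)
        = ∑ ν ∈ Icc 1 n, (max (Rf (μ + 1)) (min (Rf μ) (Cf ν))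
            - max (Rf (μ + 1)) (min (Rf μ) (Cf (ν + 1)))) := Finset.sum_congr rfl hterm
      _ = max (Rf (μ + 1)) (min (Rf μ) (Cf 1)) - max (Rf (μ + 1)) (min (Rf μ) (Cf (n + 1))) :=
          sum_Icc_telescope (fun ν => max (Rf (μ + 1)) (min (Rf μ) (Cf ν))) n
      _ = e (τf μ) - b μ := by
          have hC1 : Cf 1 = Rf 1 := hRC.symm
          have hR1 : Rf μ ≤ Rf 1 := hRdec 1 μ le_rfl hμ1
          have h0 := hCtop
          have hnn := hRnn (μ + 1) (by omega)
          have hrec := hRrec μ hμ1 hμ2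
          omega
  -- column sums
  have hcolsum : ∀ ν ∈ Icc 1 n, (∑ μ ∈ Icc 1 m, (Γf μ ν : ℤ)) = a ν - e (σf ν) := by
    intro ν hν
    obtain ⟨hν1, hν2⟩ := mem_Icc.mp hν
    have hCν : Cf (ν + 1) ≤ Cf ν := hCdec ν (ν + 1) hν1 (by omega)
    have hterm : ∀ μ ∈ Icc 1 m, (Γf μ ν : ℤ) =
        max (Cf (ν + 1)) (min (Cf ν) (Rf μ)) - max (Cf (ν + 1)) (min (Cf ν) (Rf (μ + 1))) := by
      intro μ hμ
      obtain ⟨hμ1, hμ2⟩ := mem_Icc.mp hμ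
      have hRμ : Rf (μ + 1) ≤ Rf μ := hRdec μ (μ + 1) hμ1 (by omega)
      have := hΓval μ ν
      omega
    calc ∑ μ ∈ Icc 1 m, (Γf μ ν : ℤ)
        = ∑ μ ∈ Icc 1 m, (max (Cf (ν + 1)) (min (Cf ν) (Rf μ))
            - max (Cf (ν + 1)) (min (Cf ν) (Rf (μ + 1)))) := Finset.sum_congr rfl hterm
      _ = max (Cf (ν + 1)) (min (Cf ν) (Rf 1)) - max (Cf (ν + 1)) (min (Cf ν) (Rf (m + 1))) :=
          sum_Icc_telescope (fun μ => max (Cf (ν + 1)) (min (Cf ν) (Rf μ))) m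
      _ = a ν - e (σf ν) := by
          have hC1 : Cf ν ≤ Cf 1 := hCdec 1 ν le_rfl hν1
          have hC1' : Cf 1 = Rf 1 := hRC.symm
          have h0 := hRtop
          have hnn := hCnn (ν + 1) (by omega)
          have hrec := hCrec ν hν1 hν2
          omega
  -- support conditions
  have hsupp : ∀ μ ∈ Icc 1 m, ∀ ν ∈ Icc 1 n, Γf μ ν ≠ 0 →
      b μ < e (τf μ) ∧ e (τf μ) ≤ e (σf ν) ∧ e (σf ν) < a ν ∧
      (Γf μ ν : ℤ) ≤ e (τf μ) - b μ ∧ (Γf μ ν : ℤ) ≤ a ν - e (σf ν) := by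
    intro μ hμ ν hν hΓ
    obtain ⟨hμ1, hμ2⟩ := mem_Icc.mp hμ
    obtain ⟨hν1, hν2⟩ := mem_Icc.mp hν
    have hΓv := hΓval μ ν
    have hΓpos : 0 < (Γf μ ν : ℤ) := by exact_mod_cast Nat.pos_of_ne_zero hΓ
    have hR := hRrec μ hμ1 hμ2
    have hC := hCrec ν hν1 hν2
    refine ⟨by omega, ?_, by omega, by omega, by omega⟩
    by_contra hlt
    push_neg at hlt
    obtain ⟨p, q, hp1, hpm, hqn, hMIcc, hNIcc, hRCle⟩ := hVC (e (τf μ)) ⟨μ, hμ1, hμ2, le_rfl⟩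
    have hμin : μ ∈ Icc (m + 1 - p) m := by
      rw [← hMIcc]
      exact Finset.mem_filter.mpr ⟨mem_Icc.mpr ⟨hμ1, hμ2⟩, le_rfl⟩
    have hνnotin : ν ∉ Icc (n + 1 - q) n := by
      rw [← hNIcc]
      intro hmem
      exact absurd (Finset.mem_filter.mp hmem).2 (not_le.mpr hlt)
    have hν0 : ν + 1 ≤ n + 1 - q := by
      simp only [mem_Icc, not_and, not_le] at hνnotin
      omega
    have h1 : Rf μ ≤ Rf (m + 1 - p) := hRdec (m + 1 - p) μ (by omega) (mem_Icc.mp hμin).1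
    have h2 : Cf (n + 1 - q) ≤ Cf (ν + 1) := hCdec (ν + 1) (n + 1 - q) (by omega) hν0
    omega
  exact ⟨σf, τf, Γf, hσmem, hτmem, hinjσ, hinjτ, hdisj, hcover, hsupp, hrowsum, hcolsum⟩

end Backward2


/-- Theorem: a triple `(b,e,a)` admits a balancing datum iff it satisfies the
realizability criterion. -/
theorem stmt3 (m n : ℕ) (hm : 1 ≤ m) (hn : 1 ≤ n)
    (b e a : ℕ → ℤ) (hb : Incr b m) (he : Incr e (m + n)) (ha : Incr a n) :
    HasBalDatum b e a m n ↔ RealizCrit b e a m n := by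
  constructor
  · rintro ⟨σ, τ, Γ, hD⟩
    exact forward hm hn hb he ha hD
  · intro hcrit
    exact backward hm hn hb he ha hcrit
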